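/- (Tightness of the SDR.) If the SDR problem is strictly feasible, then every optimal solution (V*₁, …, V*_K, Q*) of the SDR problem satisfies rank(V*_k) = 1 for all k = 1, …, K. -/

import Mathlib

open BigOperators Matrix ComplexOrder

noncomputable section

/-- The matrix `B_m(V, Q)` appearing in the fronthaul-rate constraint of the SDR. -/
def Bmat {M K : ℕ} (Cbar : Fin M → ℝ)
    (V : Fin K → Matrix (Fin M) (Fin M) ℂ) (Q : Matrix (Fin M) (Fin M) ℂ)
    (m : Fin M) : Matrix (Fin M) (Fin M) ℂ :=
  fun s t =>
    if s = m ∧ t = m then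
      Q m m - (((2 : ℝ) ^ (-(Cbar m)) : ℝ) : ℂ) * ((∑ k, V k m m) + Q m m)
    else if m ≤ s ∧ m ≤ t then Q s t
    else 0

/-- Feasibility for the SDR problem. -/
def SDRFeasible {M K : ℕ} (hvec : Fin K → Fin M → ℂ) (σ γbar : Fin K → ℝ)
    (Cbar Pbar : Fin M → ℝ)
    (V : Fin K → Matrix (Fin M) (Fin M) ℂ) (Q : Matrix (Fin M) (Fin M) ℂ) : Prop :=
  (∀ k, (V k).PosSemidef) ∧ Q.PosSemidef ∧
  (∀ k, σ k ^ 2 ≤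
    (star (hvec k) ⬝ᵥ
      ((((1 + 1 / γbar k : ℝ) : ℂ) • V k - (∑ j, V j) - Q) *ᵥ hvec k)).re) ∧
  (∀ m, (Bmat Cbar V Q m).PosSemidef) ∧
  (∀ m, (∑ k, V k m m).re + (Q m m).re ≤ Pbar m)

/-- Objective value of the SDR problem: `∑ₖ tr(Vₖ) + tr(Q)` (a real number). -/
def SDRObj {M K : ℕ} (V : Fin K → Matrix (Fin M) (Fin M) ℂ)
    (Q : Matrix (Fin M) (Fin M) ℂ) : ℝ :=
  (∑ k, (V k).trace).re + Q.trace.re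

/-- Strict feasibility of the SDR problem. -/
def SDRStrictFeasible {M K : ℕ} (hvec : Fin K → Fin M → ℂ) (σ γbar : Fin K → ℝ)
    (Cbar Pbar : Fin M → ℝ) : Prop :=
  ∃ (V : Fin K → Matrix (Fin M) (Fin M) ℂ) (Q : Matrix (Fin M) (Fin M) ℂ),
    SDRFeasible hvec σ γbar Cbar Pbar V Q ∧
    (∀ k, (V k).PosDef) ∧ Q.PosDef ∧
    (∀ k, σ k ^ 2 <
      (star (hvec k) ⬝ᵥ
        ((((1 + 1 / γbar k : ℝ) : ℂ) • V k - (∑ j, V j) - Q) *ᵥ hvec k)).re) ∧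
    (∀ m, (∑ k, V k m m).re + (Q m m).re < Pbar m) ∧
    (∀ m : Fin M,
      (((Bmat Cbar V Q m).submatrix
        (fun i : {s : Fin M // m ≤ s} => (i : Fin M))
        (fun i : {s : Fin M // m ≤ s} => (i : Fin M))).PosDef))

/-!
Fix an optimal `(V*, Q*)` and a user `k`, write `h = h_k`, and replace `V*_k` by the rank-one matrix
`W = (V*_k h)(V*_k h)ᴴ / (hᴴ V*_k h)`; the denominator is positive because `σ_k > 0` and the SINR
constraint of user `k` would otherwise fail. By Cauchy–Schwarz for the form `V*_k`, the difference
`D = V*_k - W` is positive semidefinite, and `hᴴ D h = 0`. Hence the SINR of user `k` is unchanged,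
the interference seen by every other user drops, and the sums `∑ₖ Vₖ^{(m,m)}` drop, which only
relaxes the fronthaul and power constraints. The new point is feasible with objective smaller by
`tr D ≥ 0`, so optimality gives `tr D = 0`, hence `D = 0` and `V*_k = W` has rank one.
-/

namespace Matrix

variable {n 𝕜 : Type*} [Fintype n] [RCLike 𝕜]

theorem PosSemidef.norm_dotProduct_mulVec_sq_le {A : Matrix n n 𝕜} (hA : A.PosSemidef)
    (x y : n → 𝕜) :
    ‖star x ⬝ᵥ (A *ᵥ y)‖ ^ 2 ≤
      RCLike.re (star x ⬝ᵥ (A *ᵥ x)) * RCLike.re (star y ⬝ᵥ (A *ᵥ y)) := by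
  let := A.toSeminormedAddCommGroup hA
  let := A.toInnerProductSpace hA
  have hinner : ∀ u w : n → 𝕜, inner 𝕜 u w = star u ⬝ᵥ (A *ᵥ w) :=
    fun u w => dotProduct_comm _ _
  have := inner_mul_inner_self_le (𝕜 := 𝕜) x y
  rwa [norm_inner_symm y x, ← sq, hinner, hinner, hinner] at this

theorem IsHermitian.coe_re_dotProduct_mulVec {A : Matrix n n 𝕜} (hA : A.IsHermitian)
    (x : n → 𝕜) : (RCLike.re (star x ⬝ᵥ (A *ᵥ x)) : 𝕜) = star x ⬝ᵥ (A *ᵥ x) :=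
  RCLike.conj_eq_iff_re.mp (RCLike.conj_eq_iff_im.mpr (hA.im_star_dotProduct_mulVec_self x))

-- `(A h)(A h)ᴴ / (hᴴ A h)`; it is `0` when `hᴴ A h = 0`, since `0⁻¹ = 0`.
def rankOneCompression (A : Matrix n n 𝕜) (h : n → 𝕜) : Matrix n n 𝕜 :=
  (RCLike.re (star h ⬝ᵥ (A *ᵥ h)))⁻¹ • vecMulVec (A *ᵥ h) (star (A *ᵥ h))

variable {A : Matrix n n 𝕜} {h : n → 𝕜}

theorem rankOneCompression_mulVec (x : n → 𝕜) :
    rankOneCompression A h *ᵥ x =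
      ((RCLike.re (star h ⬝ᵥ (A *ᵥ h)))⁻¹ • (star (A *ᵥ h) ⬝ᵥ x)) • (A *ᵥ h) := by
  rw [rankOneCompression, smul_mulVec, vecMulVec_mulVec, op_smul_eq_smul, smul_assoc]

theorem dotProduct_rankOneCompression_mulVec (x : n → 𝕜) :
    star x ⬝ᵥ (rankOneCompression A h *ᵥ x) =
      (((RCLike.re (star h ⬝ᵥ (A *ᵥ h)))⁻¹ * ‖star x ⬝ᵥ (A *ᵥ h)‖ ^ 2 : ℝ) : 𝕜) := by
  rw [rankOneCompression_mulVec, dotProduct_smul, smul_eq_mul, star_dotProduct (A *ᵥ h) x,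
    RCLike.real_smul_eq_coe_mul, mul_assoc, RCLike.star_def, RCLike.conj_mul]
  push_cast
  rfl

theorem posSemidef_rankOneCompression (hA : A.PosSemidef) (h : n → 𝕜) :
    (rankOneCompression A h).PosSemidef :=
  (posSemidef_vecMulVec_self_star _).smul (inv_nonneg.mpr (hA.re_dotProduct_nonneg h))

theorem PosSemidef.sub_rankOneCompression (hA : A.PosSemidef) (h : n → 𝕜) :
    (A - rankOneCompression A h).PosSemidef := by
  refine PosSemidef.of_dotProduct_mulVec_nonneg
    (hA.isHermitian.sub (posSemidef_rankOneCompression hA h).isHermitian) fun x => ?_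
  rw [sub_mulVec, dotProduct_sub, dotProduct_rankOneCompression_mulVec,
    ← hA.isHermitian.coe_re_dotProduct_mulVec, ← RCLike.ofReal_sub, RCLike.ofReal_nonneg,
    sub_nonneg, ← div_eq_inv_mul]
  exact div_le_of_le_mul₀ (hA.re_dotProduct_nonneg h) (hA.re_dotProduct_nonneg x)
    (hA.norm_dotProduct_mulVec_sq_le x h)

theorem IsHermitian.dotProduct_sub_rankOneCompression_mulVec_self (hA : A.IsHermitian) :
    star h ⬝ᵥ ((A - rankOneCompression A h) *ᵥ h) = 0 := by
  obtain ⟨r, hr⟩ : ∃ r : ℝ, star h ⬝ᵥ (A *ᵥ h) = r := ⟨_, (hA.coe_re_dotProduct_mulVec h).symm⟩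
  rw [sub_mulVec, dotProduct_sub, dotProduct_rankOneCompression_mulVec, hr, RCLike.ofReal_re,
    RCLike.norm_ofReal, sq_abs, sq, ← mul_assoc, inv_mul_mul_self, sub_self]

theorem IsHermitian.rankOneCompression_mulVec_self (hA : A.IsHermitian)
    (hpos : 0 < RCLike.re (star h ⬝ᵥ (A *ᵥ h))) :
    rankOneCompression A h *ᵥ h = A *ᵥ h := by
  rw [rankOneCompression_mulVec, star_dotProduct (A *ᵥ h) h,
    ← hA.coe_re_dotProduct_mulVec, RCLike.star_def, RCLike.conj_ofReal,
    RCLike.real_smul_eq_coe_mul, ← RCLike.ofReal_mul, RCLike.ofReal_re, inv_mul_cancel₀ hpos.ne',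
    RCLike.ofReal_one, one_smul]

theorem IsHermitian.rank_rankOneCompression (hA : A.IsHermitian)
    (hpos : 0 < RCLike.re (star h ⬝ᵥ (A *ᵥ h))) :
    (rankOneCompression A h).rank = 1 := by
  have hv : A *ᵥ h ≠ 0 := by
    rintro hv
    rw [hv, dotProduct_zero, map_zero] at hpos
    exact lt_irrefl _ hpos
  have hrange : LinearMap.range (rankOneCompression A h).mulVecLin = 𝕜 ∙ (A *ᵥ h) := by
    apply le_antisymm
    · rintro _ ⟨x, rfl⟩
      rw [mulVecLin_apply, rankOneCompression_mulVec]
      exact Submodule.smul_mem _ _ (Submodule.mem_span_singleton_self _)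
    · rw [Submodule.span_singleton_le_iff_mem]
      exact ⟨h, hA.rankOneCompression_mulVec_self hpos⟩
  rw [rank, hrange, finrank_span_singleton hv]

theorem PosSemidef.eq_zero_of_re_trace_nonpos (hA : A.PosSemidef)
    (htr : RCLike.re A.trace ≤ 0) : A = 0 :=
  hA.trace_eq_zero_iff.mp <| le_antisymm
    (RCLike.nonpos_iff.mpr ⟨htr, (RCLike.nonneg_iff.mp hA.trace_nonneg).2⟩) hA.trace_nonneg

end Matrix

theorem Fintype.sum_update_eq_sub {ι G : Type*} [Fintype ι] [DecidableEq ι] [AddCommGroup G]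
    (f : ι → G) (i : ι) (b : G) :
    ∑ j, Function.update f i b j = ∑ j, f j - (f i - b) := by
  rw [Finset.sum_update_of_mem (Finset.mem_univ i),
    Finset.sum_eq_add_sum_sdiff_singleton_of_mem (Finset.mem_univ i) f]
  abel

section SDR

variable {M K : ℕ} {hvec : Fin K → Fin M → ℂ} {σ γbar : Fin K → ℝ} {Cbar Pbar : Fin M → ℝ}
  {V : Fin K → Matrix (Fin M) (Fin M) ℂ} {Q : Matrix (Fin M) (Fin M) ℂ}

theorem re_dotProduct_sinr_mulVec (h : Fin M → ℂ) (c : ℝ) (k : Fin K) :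
    (star h ⬝ᵥ (((c : ℂ) • V k - ∑ j, V j - Q) *ᵥ h)).re =
      c * (star h ⬝ᵥ (V k *ᵥ h)).re - ∑ j, (star h ⬝ᵥ (V j *ᵥ h)).re
        - (star h ⬝ᵥ (Q *ᵥ h)).re := by
  simp only [sub_mulVec, smul_mulVec, sum_mulVec, dotProduct_sub, dotProduct_smul,
    dotProduct_sum, Complex.sub_re, Complex.re_sum, smul_eq_mul, Complex.re_ofReal_mul]

theorem SDRFeasible.re_dotProduct_mulVec_pos (hf : SDRFeasible hvec σ γbar Cbar Pbar V Q)
    {k : Fin K} (hσ : 0 < σ k) : 0 < (star (hvec k) ⬝ᵥ (V k *ᵥ hvec k)).re := by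
  obtain ⟨hV, hQ, hSINR, -, -⟩ := hf
  refine ((hV k).re_dotProduct_nonneg (hvec k)).lt_of_ne fun h0 => ?_
  have hsinr := hSINR k
  rw [RCLike.re_to_complex] at h0
  rw [re_dotProduct_sinr_mulVec, ← h0] at hsinr
  have hsum : 0 ≤ ∑ j, (star (hvec k) ⬝ᵥ (V j *ᵥ hvec k)).re :=
    Finset.sum_nonneg fun j _ => (hV j).re_dotProduct_nonneg (hvec k)
  have hq := hQ.re_dotProduct_nonneg (hvec k)
  rw [RCLike.re_to_complex] at hq
  linarith [pow_pos hσ 2]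

theorem Bmat_eq_add_diagonal {V' : Fin K → Matrix (Fin M) (Fin M) ℂ} {m : Fin M} {d : ℂ}
    (hsum : ∑ k, V' k m m = ∑ k, V k m m - d) :
    Bmat Cbar V' Q m =
      Bmat Cbar V Q m + diagonal (Pi.single m (((2 : ℝ) ^ (-Cbar m) : ℝ) * d)) := by
  ext s t
  by_cases hst : s = m ∧ t = m
  · obtain ⟨rfl, rfl⟩ := hst
    simp only [Bmat, and_self, if_true, Matrix.add_apply, diagonal_apply_eq, Pi.single_eq_same,
      hsum]
    ring
  · have hdiag : diagonal (Pi.single m (((2 : ℝ) ^ (-Cbar m) : ℝ) * d)) s t = 0 := by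
      by_cases hs : s = t
      · subst hs
        simp [Pi.single_eq_of_ne (show s ≠ m by tauto)]
      · exact diagonal_apply_ne _ hs
    simp only [Bmat, if_neg hst, Matrix.add_apply, hdiag, add_zero]

theorem SDRFeasible.update (hf : SDRFeasible hvec σ γbar Cbar Pbar V Q) {k : Fin K}
    {W : Matrix (Fin M) (Fin M) ℂ} (hW : W.PosSemidef) (hD : (V k - W).PosSemidef)
    (hDk : star (hvec k) ⬝ᵥ ((V k - W) *ᵥ hvec k) = 0) :
    SDRFeasible hvec σ γbar Cbar Pbar (Function.update V k W) Q := by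
  obtain ⟨hV, hQ, hSINR, hB, hP⟩ := hf
  have hsum := Fintype.sum_update_eq_sub V k W
  have hsum_apply : ∀ s t, ∑ j, Function.update V k W j s t = ∑ j, V j s t - (V k - W) s t :=
    fun s t => by rw [← Matrix.sum_apply, hsum, Matrix.sub_apply, Matrix.sum_apply]
  refine ⟨fun j => ?_, hQ, fun j => ?_, fun m => ?_, fun m => ?_⟩
  · rcases eq_or_ne j k with rfl | hjk
    · simpa using hW
    · simpa [hjk] using hV j
  · rcases eq_or_ne j k with rfl | hjk
    · have hmat : ((1 + 1 / γbar j : ℝ) : ℂ) • Function.update V j W j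
            - ∑ i, Function.update V j W i - Q =
          (((1 + 1 / γbar j : ℝ) : ℂ) • V j - ∑ i, V i - Q)
            + ((1 : ℂ) - ((1 + 1 / γbar j : ℝ) : ℂ)) • (V j - W) := by
        rw [hsum, Function.update_self]
        module
      rw [hmat, add_mulVec, dotProduct_add, smul_mulVec, dotProduct_smul, hDk, smul_zero,
        add_zero]
      exact hSINR j
    · have hmat : ((1 + 1 / γbar j : ℝ) : ℂ) • Function.update V k W j
            - ∑ i, Function.update V k W i - Q =
          (((1 + 1 / γbar j : ℝ) : ℂ) • V j - ∑ i, V i - Q) + (V k - W) := by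
        rw [hsum, Function.update_of_ne hjk]
        abel
      have hDj := hD.re_dotProduct_nonneg (hvec j)
      rw [RCLike.re_to_complex] at hDj
      rw [hmat, add_mulVec, dotProduct_add, Complex.add_re]
      linarith [hSINR j]
  · rw [Bmat_eq_add_diagonal (hsum_apply m m)]
    refine (hB m).add (posSemidef_diagonal_iff.mpr (Pi.single_nonneg.mpr ?_))
    exact mul_nonneg (by simp only [Complex.zero_le_real]; positivity) hD.diag_nonneg
  · rw [hsum_apply, Complex.sub_re]
    linarith [hP m, (Complex.nonneg_iff.mp (hD.diag_nonneg (i := m))).1]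

theorem SDRObj_update (V : Fin K → Matrix (Fin M) (Fin M) ℂ) (Q : Matrix (Fin M) (Fin M) ℂ)
    (k : Fin K) (W : Matrix (Fin M) (Fin M) ℂ) :
    SDRObj (Function.update V k W) Q = SDRObj V Q - (V k - W).trace.re := by
  rw [SDRObj, SDRObj, ← trace_sum, Fintype.sum_update_eq_sub, trace_sub, trace_sum,
    Complex.sub_re]
  ring

end SDR

theorem stmt14_general {M K : ℕ}
    (hvec : Fin K → Fin M → ℂ) (σ γbar : Fin K → ℝ) (Cbar Pbar : Fin M → ℝ)
    (hσ : ∀ k, 0 < σ k)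
    (Vstar : Fin K → Matrix (Fin M) (Fin M) ℂ) (Qstar : Matrix (Fin M) (Fin M) ℂ)
    (hfeas : SDRFeasible hvec σ γbar Cbar Pbar Vstar Qstar)
    (hopt : ∀ (V : Fin K → Matrix (Fin M) (Fin M) ℂ) (Q : Matrix (Fin M) (Fin M) ℂ),
      SDRFeasible hvec σ γbar Cbar Pbar V Q → SDRObj Vstar Qstar ≤ SDRObj V Q) :
    ∀ k, (Vstar k).rank = 1 := by
  intro k
  have hVk := hfeas.1 k
  set W := rankOneCompression (Vstar k) (hvec k)
  have hD := hVk.sub_rankOneCompression (hvec k)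
  have hfeasW : SDRFeasible hvec σ γbar Cbar Pbar (Function.update Vstar k W) Qstar :=
    hfeas.update (posSemidef_rankOneCompression hVk (hvec k)) hD
      hVk.isHermitian.dotProduct_sub_rankOneCompression_mulVec_self
  have hWopt : Vstar k = W := by
    have hobj := hopt _ _ hfeasW
    rw [SDRObj_update] at hobj
    refine sub_eq_zero.mp (hD.eq_zero_of_re_trace_nonpos ?_)
    rw [RCLike.re_to_complex]
    linarith
  rw [hWopt]
  exact hVk.isHermitian.rank_rankOneCompression (hfeas.re_dotProduct_mulVec_pos (hσ k))

/-- tightness of the SDR: if the SDR problem is strictly feasible, then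
every optimal solution `(V*, Q*)` satisfies `rank(V*ₖ) = 1` for all `k`. -/
theorem stmt14 {M K : ℕ} (hM : 0 < M) (hK : 0 < K)
    (hvec : Fin K → Fin M → ℂ) (σ γbar : Fin K → ℝ) (Cbar Pbar : Fin M → ℝ)
    (hσ : ∀ k, 0 < σ k) (hγ : ∀ k, 0 < γbar k)
    (hC : ∀ m, 0 < Cbar m) (hP : ∀ m, 0 < Pbar m)
    (hstrict : SDRStrictFeasible hvec σ γbar Cbar Pbar)
    (Vstar : Fin K → Matrix (Fin M) (Fin M) ℂ) (Qstar : Matrix (Fin M) (Fin M) ℂ)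
    (hfeas : SDRFeasible hvec σ γbar Cbar Pbar Vstar Qstar)
    (hopt : ∀ (V : Fin K → Matrix (Fin M) (Fin M) ℂ) (Q : Matrix (Fin M) (Fin M) ℂ),
      SDRFeasible hvec σ γbar Cbar Pbar V Q → SDRObj Vstar Qstar ≤ SDRObj V Q) :
    ∀ k, (Vstar k).rank = 1 :=
  stmt14_general hvec σ γbar Cbar Pbar hσ Vstar Qstar hfeas hopt
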